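/- arXiv:2010.01896 — 2 statements merged into one kernel-verified Lean document; each statement's English description precedes it below -/
import Mathlib

section
/- For every η ∈ K^* and every finite subset S ⊂ C(k), one has N_{S,gcd}(η, η') ≥ N_S(η) − N̄_S(η) − 3𝔤. -/
/-!
At a zero `𝔭` of `η` of order `m`, the derivative `η'` has order `m - 1 - v_𝔭(d_𝔭 t)`, so
`min {v_𝔭^0(η), v_𝔭^0(η')} ≥ (m - 1) - max {0, v_𝔭(d_𝔭 t)}`; summing over the zeros of `η`
outside `S` gives the bound, because `Σ_𝔭 max {0, v_𝔭(d_𝔭 t)} ≤ 3𝔤`. That last bound only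
controls finite sums once `v_𝔭(d_𝔭 t) > 0` is known to hold at finitely many `𝔭` (a `finsum`
with infinite support is `0`); this finiteness comes from Riemann–Roch.
-/

open scoped BigOperators Classical

namespace FunctionFieldGCD

variable {K : Type*} [Field K] {Point : Type*}

/-- Truncated order of vanishing `v_𝔭^0(f) = max {0, v_𝔭(f)}`. -/
noncomputable def v0 (v : Point → K → ℤ) (p : Point) (f : K) : ℤ := max 0 (v p f)

/-- The height `h(f) = Σ_𝔭 −min{0, v_𝔭(f)}` of `f`, counting poles with multiplicity. -/
noncomputable def height (v : Point → K → ℤ) (f : K) : ℤ := ∑ᶠ p : Point, max 0 (-(v p f))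

/-- `min {v_𝔭^0(f), v_𝔭^0(g)}` with the convention `v_𝔭^0(0) = +∞`. -/
noncomputable def minv0 (v : Point → K → ℤ) (p : Point) (f g : K) : ℤ :=
  if f = 0 then v0 v p g else if g = 0 then v0 v p f else min (v0 v p f) (v0 v p g)

/-- `N_{S,gcd}(f,g) = Σ_{𝔭∉S} min{v_𝔭^0(f), v_𝔭^0(g)}`. -/
noncomputable def NSgcd (v : Point → K → ℤ) (S : Set Point) (f g : K) : ℤ :=
  ∑ᶠ p ∈ Sᶜ, minv0 v p f g

/-- `h_gcd(f,g) = Σ_{𝔭} min{v_𝔭^0(f), v_𝔭^0(g)}`. -/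
noncomputable def hgcd (v : Point → K → ℤ) (f g : K) : ℤ :=
  ∑ᶠ p : Point, minv0 v p f g

/-- `N_S(f)`: number of zeros of `f` outside `S`, with multiplicity. -/
noncomputable def NS (v : Point → K → ℤ) (S : Set Point) (f : K) : ℤ :=
  ∑ᶠ p ∈ Sᶜ, v0 v p f

/-- `N̄_S(f)`: number of zeros of `f` outside `S`, without multiplicity. -/
noncomputable def NSbar (v : Point → K → ℤ) (S : Set Point) (f : K) : ℤ :=
  ∑ᶠ p ∈ Sᶜ, min 1 (v0 v p f)

/-- membership in the group `O_S^*` of `S`-units. -/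
def IsSUnit (v : Point → K → ℤ) (S : Set Point) (f : K) : Prop :=
  f ≠ 0 ∧ ∀ p ∉ S, v p f = 0

/-- `f` is a constant, i.e. belongs to (the image of) `k`. -/
def IsConst (k : Type*) [Field k] [Algebra k K] (f : K) : Prop :=
  ∃ c : k, algebraMap k K c = f

/-- Projective height of a finite tuple: `h(f_0,…,f_m) = Σ_𝔭 −min_j v_𝔭(f_j)`. -/
noncomputable def heightProj {ι : Type*} [Fintype ι] (v : Point → K → ℤ) (f : ι → K) : ℤ :=
  ∑ᶠ p : Point,
    -(if h : (Finset.univ : Finset ι).Nonempty then Finset.univ.inf' h fun j => v p (f j) else 0)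

/-- `v_𝔭(F) = min_{i ∈ I_F} v_𝔭(a_i)` for a multivariable polynomial `F = Σ a_i x^i`. -/
noncomputable def vPoly {n : ℕ} (v : Point → K → ℤ) (p : Point) (F : MvPolynomial (Fin n) K) :
    ℤ :=
  if h : F.support.Nonempty then F.support.inf' h fun mm => v p (MvPolynomial.coeff mm F) else 0

/-- The height `h(F) = Σ_𝔭 −v_𝔭(F)` of a multivariable polynomial. -/
noncomputable def hPoly {n : ℕ} (v : Point → K → ℤ) (F : MvPolynomial (Fin n) K) : ℤ :=
  ∑ᶠ p : Point, -(vPoly v p F)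

/-- The relevant height `h̃(F) = Σ_𝔭 −min{0, v_𝔭(F)}` of a multivariable polynomial. -/
noncomputable def htilde {n : ℕ} (v : Point → K → ℤ) (F : MvPolynomial (Fin n) K) : ℤ :=
  ∑ᶠ p : Point, max 0 (-(vPoly v p F))

/-- `max_{1≤i≤n} h(g_i)` (heights are nonnegative, so the `toNat` is harmless). -/
noncomputable def maxHeight {n : ℕ} (v : Point → K → ℤ) (g : Fin n → K) : ℤ :=
  ((Finset.univ.sup fun i => (height v (g i)).toNat : ℕ) : ℤ)

/-- `u^m = u_1^{m_1} ⋯ u_n^{m_n}` for an integer exponent vector `m`. -/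
noncomputable def prodZPow {n : ℕ} (u : Fin n → K) (mm : Fin n → ℤ) : K :=
  ∏ j, u j ^ mm j

/-- Coprimality of multivariable polynomials: no common non-unit factor. -/
def CoprimePoly {n : ℕ} (F G : MvPolynomial (Fin n) K) : Prop :=
  ∀ P : MvPolynomial (Fin n) K, P ∣ F → P ∣ G → IsUnit P

/-- `P` is a monomial `a·x^i`. -/
def IsMonomialPoly {n : ℕ} (P : MvPolynomial (Fin n) K) : Prop :=
  ∃ (mm : Fin n →₀ ℕ) (a : K), P = MvPolynomial.monomial mm a

/-- Axioms expressing that `K`, equipped with the family of normalized order functions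
`v_𝔭` indexed by the points `𝔭 ∈ C(k)` of a smooth projective curve `C` of genus `genus`
over the algebraically closed field `k`, is the function field `k(C)`. -/
structure IsFunctionField (k : Type*) [Field k] [Algebra k K]
    (v : Point → K → ℤ) (genus : ℕ) : Prop where
  v_mul : ∀ (p : Point) (f g : K), f ≠ 0 → g ≠ 0 → v p (f * g) = v p f + v p g
  v_add : ∀ (p : Point) (f g : K), f ≠ 0 → g ≠ 0 → f + g ≠ 0 → min (v p f) (v p g) ≤ v p (f + g)
  v_one : ∀ p : Point, v p (1 : K) = 0
  v_algebraMap : ∀ (p : Point) (c : k), c ≠ 0 → v p (algebraMap k K c) = 0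
  exists_uniformizer : ∀ p : Point, ∃ f : K, f ≠ 0 ∧ v p f = 1
  finite_support : ∀ f : K, f ≠ 0 → {p : Point | v p f ≠ 0}.Finite
  sum_v : ∀ f : K, f ≠ 0 → ∑ᶠ p : Point, v p f = 0
  const_of_nonneg : ∀ f : K, f ≠ 0 → (∀ p : Point, 0 ≤ v p f) → ∃ c : k, algebraMap k K c = f
  riemann_roch : ∀ D : Point →₀ ℤ, 2 * (genus : ℤ) - 2 < D.sum (fun _ d => d) →
    (Module.finrank k
        (Submodule.span k {f : K | f = 0 ∨ ∀ p : Point, -(D p) ≤ v p f}) : ℤ)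
      = D.sum (fun _ d => d) + 1 - genus

/-- Axioms for the global derivation `η ↦ η' = dη/dt` on `K` determined by an element
`t` as in Proposition 12 (`dt p` plays the role of `v_𝔭(d_𝔭 t)`). -/
structure IsGoodDerivation (k : Type*) [Field k] [Algebra k K]
    (v : Point → K → ℤ) (genus : ℕ) (D : K → K) (dt : Point → ℤ) : Prop where
  map_add : ∀ f g : K, D (f + g) = D f + D g
  leibniz : ∀ f g : K, D (f * g) = f * D g + g * D f
  map_const : ∀ c : k, D (algebraMap k K c) = 0
  ker_const : ∀ f : K, D f = 0 → ∃ c : k, algebraMap k K c = f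
  v_D_of_vne : ∀ f : K, f ≠ 0 → ∀ p : Point, v p f ≠ 0 →
    D f ≠ 0 ∧ v p (D f) = v p f - 1 - dt p
  v_D_of_veq : ∀ f : K, f ≠ 0 → ∀ p : Point, v p f = 0 → D f ≠ 0 → -(dt p) ≤ v p (D f)
  sum_dt : ∑ᶠ p : Point, max 0 (dt p) ≤ 3 * (genus : ℤ)

/-- `D_u(F) = Σ_{i∈I_F} ((a_i u^i)' / u^i)·x^i`. -/
noncomputable def Du {n : ℕ} (D : K → K) (u : Fin n → K) (F : MvPolynomial (Fin n) K) :
    MvPolynomial (Fin n) K :=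
  ∑ mm ∈ F.support,
    MvPolynomial.monomial mm
      ((D (MvPolynomial.coeff mm F * ∏ j, u j ^ mm j)) / ∏ j, u j ^ mm j)


theorem minv0_nonneg (v : Point → K → ℤ) (p : Point) (f g : K) : 0 ≤ minv0 v p f g := by
  unfold minv0 v0
  split_ifs <;> simp

theorem minv0_le_v0_left (v : Point → K → ℤ) (p : Point) {f : K} (hf : f ≠ 0) (g : K) :
    minv0 v p f g ≤ v0 v p f := by
  unfold minv0
  split_ifs <;> simp_all

section Valuation

variable {k : Type*} [Field k] [Algebra k K] {v : Point → K → ℤ} {genus : ℕ}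

theorem IsFunctionField.v_smul (hK : IsFunctionField k v genus) (p : Point) {c : k} (hc : c ≠ 0)
    {f : K} (hf : f ≠ 0) : v p (c • f) = v p f := by
  rw [Algebra.smul_def, hK.v_mul p _ f ((map_ne_zero _).2 hc) hf, hK.v_algebraMap p c hc,
    zero_add]

def IsFunctionField.orderGE (hK : IsFunctionField k v genus) (p : Point) (n : ℤ) :
    Submodule k K where
  carrier := {f | f = 0 ∨ n ≤ v p f}
  zero_mem' := Or.inl rfl
  add_mem' := by
    intro f g hf hg
    by_cases hf0 : f = 0
    · simpa [hf0] using hg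
    by_cases hg0 : g = 0
    · simpa [hg0] using hf
    by_cases hfg : f + g = 0
    · exact Or.inl hfg
    exact Or.inr ((le_min (hf.resolve_left hf0) (hg.resolve_left hg0)).trans
      (hK.v_add p f g hf0 hg0 hfg))
  smul_mem' := by
    intro c f hf
    by_cases hc : c = 0
    · simp [hc]
    by_cases hf0 : f = 0
    · simp [hf0]
    exact Or.inr ((hf.resolve_left hf0).trans_eq (hK.v_smul p hc hf0).symm)

theorem IsFunctionField.mem_orderGE (hK : IsFunctionField k v genus) {p : Point} {n : ℤ}
    {f : K} : f ∈ hK.orderGE p n ↔ f = 0 ∨ n ≤ v p f :=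
  Iff.rfl

def IsFunctionField.riemannRochSpace (hK : IsFunctionField k v genus) (E : Point →₀ ℤ) :
    Submodule k K :=
  ⨅ p, hK.orderGE p (-(E p))

theorem IsFunctionField.mem_riemannRochSpace (hK : IsFunctionField k v genus)
    {E : Point →₀ ℤ} {f : K} :
    f ∈ hK.riemannRochSpace E ↔ f = 0 ∨ ∀ p, -(E p) ≤ v p f := by
  simp only [IsFunctionField.riemannRochSpace, Submodule.mem_iInf, hK.mem_orderGE]
  by_cases hf : f = 0 <;> simp [hf]

theorem IsFunctionField.riemannRochSpace_mono (hK : IsFunctionField k v genus)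
    {E E' : Point →₀ ℤ} (h : E ≤ E') : hK.riemannRochSpace E ≤ hK.riemannRochSpace E' :=
  iInf_mono fun p _ hf => hf.imp_right fun hf => (neg_le_neg (h p)).trans hf

theorem IsFunctionField.finrank_riemannRochSpace (hK : IsFunctionField k v genus)
    {E : Point →₀ ℤ} (hE : 2 * (genus : ℤ) - 2 < E.sum fun _ d => d) :
    (Module.finrank k (hK.riemannRochSpace E) : ℤ) = (E.sum fun _ d => d) + 1 - genus := by
  have hL : {f : K | f = 0 ∨ ∀ p, -(E p) ≤ v p f} = hK.riemannRochSpace E := by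
    ext f
    exact hK.mem_riemannRochSpace.symm
  rw [← hK.riemann_roch E hE, hL, Submodule.span_eq]

/-- Above degree `2𝔤 - 1`, `L(E - q)` has codimension one in `L(E)`; an element of the
difference has order exactly `-E(q)` at `q`. -/
theorem IsFunctionField.exists_v_eq_of_two_mul_genus_le_deg (hK : IsFunctionField k v genus)
    (E : Point →₀ ℤ) (q : Point) (hE : 2 * (genus : ℤ) ≤ E.sum fun _ d => d) :
    ∃ f ∈ hK.riemannRochSpace E, f ≠ 0 ∧ v q f = -(E q) := by
  set E' := E - Finsupp.single q 1
  have hdeg : (E'.sum fun _ d => d) = (E.sum fun _ d => d) - 1 := by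
    rw [Finsupp.sum_sub_index (fun _ _ _ => rfl), Finsupp.sum_single_index rfl]
  have hle : hK.riemannRochSpace E' ≤ hK.riemannRochSpace E :=
    hK.riemannRochSpace_mono (sub_le_self _ (Finsupp.single_nonneg.2 zero_le_one))
  have hne : hK.riemannRochSpace E' ≠ hK.riemannRochSpace E := by
    intro h
    have h' := hK.finrank_riemannRochSpace (E := E') (by omega)
    rw [h, hK.finrank_riemannRochSpace (by omega)] at h'
    omega
  obtain ⟨f, hfE, hfE'⟩ := SetLike.exists_of_lt (lt_of_le_of_ne hle hne)
  have hf0 : f ≠ 0 := by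
    rintro rfl
    exact hfE' (zero_mem _)
  have hfE := (hK.mem_riemannRochSpace.1 hfE).resolve_left hf0
  refine ⟨f, hK.mem_riemannRochSpace.2 (Or.inr hfE), hf0, le_antisymm ?_ (hfE q)⟩
  by_contra hq
  refine hfE' (hK.mem_riemannRochSpace.2 (Or.inr fun p => ?_))
  by_cases hp : p = q
  · subst hp
    simp only [E', Finsupp.coe_sub, Pi.sub_apply, Finsupp.single_eq_same]
    omega
  · simpa [E', Finsupp.single_apply, Ne.symm hp] using hfE p

theorem IsFunctionField.finite_setOf_not_le_orderGE (hK : IsFunctionField k v genus)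
    {M : Submodule k K} (hM : M.FG) : {q | ¬ M ≤ hK.orderGE q 0}.Finite := by
  obtain ⟨B, rfl⟩ := hM
  have hpoles (s : K) : {p | s ≠ 0 ∧ v p s ≠ 0}.Finite := by
    by_cases hs : s = 0
    · simp [hs]
    · simpa [hs] using hK.finite_support s hs
  refine (B.finite_toSet.biUnion fun s _ => hpoles s).subset fun q hq => ?_
  contrapose! hq
  rw [Set.mem_ofPred_eq, not_not]
  refine Submodule.span_le.2 fun s hs => hK.mem_orderGE.2 ?_
  by_cases hs0 : s = 0
  · exact Or.inl hs0
  · exact Or.inr (not_lt.1 fun hneg => hq (Set.mem_biUnion hs ⟨hs0, hneg.ne⟩))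

noncomputable def IsFunctionField.zerosOutside (hK : IsFunctionField k v genus) (S : Set Point)
    {η : K} (hη : η ≠ 0) :
    Finset Point :=
  ((hK.finite_support η hη).subset fun p (hp : p ∉ S ∧ 0 < v p η) => hp.2.ne').toFinset

theorem IsFunctionField.mem_zerosOutside (hK : IsFunctionField k v genus) {S : Set Point}
    {η : K} (hη : η ≠ 0) {p : Point} : p ∈ hK.zerosOutside S hη ↔ p ∉ S ∧ 0 < v p η :=
  Set.Finite.mem_toFinset _

theorem IsFunctionField.finsum_mem_compl_eq_sum_zerosOutside (hK : IsFunctionField k v genus)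
    (S : Set Point) {η : K} (hη : η ≠ 0) (g : Point → ℤ) (hg : ∀ p, v p η ≤ 0 → g p = 0) :
    ∑ᶠ p ∈ Sᶜ, g p = ∑ p ∈ hK.zerosOutside S hη, g p := by
  refine finsum_mem_eq_sum_of_subset g (fun p ⟨hpS, hp⟩ => ?_) fun p hp => ?_
  · exact (hK.mem_zerosOutside hη).2 ⟨hpS, not_le.1 fun h => hp (hg p h)⟩
  · exact ((hK.mem_zerosOutside hη).1 hp).1

end Valuation

section Derivation

variable {k : Type*} [Field k] [Algebra k K] {v : Point → K → ℤ} {genus : ℕ} {D : K → K}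
  {dt : Point → ℤ}

def IsGoodDerivation.linearMap (hD : IsGoodDerivation k v genus D dt) : K →ₗ[k] K where
  toFun := D
  map_add' := hD.map_add
  map_smul' c f := by
    rw [RingHom.id_apply, Algebra.smul_def, hD.leibniz, hD.map_const, mul_zero, add_zero,
      Algebra.smul_def]

/-- If `dt > 0` at infinitely many points, pick such a `q` at which the derivatives of all of
`L((2𝔤+1)p₀)` are regular; a function of `L((2𝔤+1)p₀)` with a simple zero at `q` then has
a derivative with a pole at `q`. -/
theorem IsGoodDerivation.finite_setOf_dt_pos (hK : IsFunctionField k v genus)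
    (hD : IsGoodDerivation k v genus D dt) : {p | 0 < dt p}.Finite := by
  by_contra hinf
  obtain ⟨p₀, -⟩ := Set.Infinite.nonempty hinf
  set L := hK.riemannRochSpace (Finsupp.single p₀ (2 * genus + 1 : ℤ))
  have hL : L.FG := by
    have hrank : (Module.finrank k L : ℤ) = 2 * genus + 1 + 1 - genus := by
      rw [hK.finrank_riemannRochSpace, Finsupp.sum_single_index rfl]
      rw [Finsupp.sum_single_index rfl]
      omega
    exact Module.Finite.iff_fg.1 (Module.finite_of_finrank_pos (by omega))
  obtain ⟨q, hdtq, hq⟩ := (Set.Infinite.sdiff hinf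
    ((hK.finite_setOf_not_le_orderGE (hL.map hD.linearMap)).insert p₀)).nonempty
  simp only [Set.mem_insert_iff, Set.mem_ofPred_eq, not_or, not_not] at hq hdtq
  obtain ⟨hqp₀, hDL⟩ := hq
  obtain ⟨f, hfE, hf0, hvf⟩ := hK.exists_v_eq_of_two_mul_genus_le_deg
    (Finsupp.single p₀ (2 * genus + 1 : ℤ) - Finsupp.single q 1) q (by
      rw [Finsupp.sum_sub_index (fun _ _ _ => rfl), Finsupp.sum_single_index rfl,
        Finsupp.sum_single_index rfl]
      omega)
  have hvf : v q f = 1 := by simpa [Finsupp.single_apply, Ne.symm hqp₀] using hvf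
  have hfL : f ∈ L := hK.riemannRochSpace_mono
    (sub_le_self _ (Finsupp.single_nonneg.2 zero_le_one)) hfE
  obtain ⟨hDf0, hvDf⟩ := hD.v_D_of_vne f hf0 q (by omega)
  rcases hK.mem_orderGE.1 (hDL (Submodule.mem_map_of_mem (f := hD.linearMap) hfL)) with h | h
  · exact hDf0 h
  · change 0 ≤ v q (D f) at h
    omega

theorem IsGoodDerivation.sum_max_zero_dt_le (hK : IsFunctionField k v genus)
    (hD : IsGoodDerivation k v genus D dt) (T : Finset Point) :
    ∑ p ∈ T, max 0 (dt p) ≤ 3 * (genus : ℤ) := by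
  have hfin := hD.finite_setOf_dt_pos hK
  have hsupp : (Function.support fun p => max 0 (dt p)) ⊆ ↑(T ∪ hfin.toFinset) := by
    intro p hp
    simp only [Function.mem_support] at hp
    simp only [Finset.coe_union, Set.Finite.coe_toFinset]
    exact Or.inr (by simp only [Set.mem_ofPred_eq]; omega)
  calc ∑ p ∈ T, max 0 (dt p) ≤ ∑ p ∈ T ∪ hfin.toFinset, max 0 (dt p) :=
        Finset.sum_le_sum_of_subset_of_nonneg Finset.subset_union_left fun _ _ _ => le_max_left _ _
    _ = ∑ᶠ p, max 0 (dt p) := (finsum_eq_sum_of_support_subset _ hsupp).symm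
    _ ≤ 3 * genus := hD.sum_dt

theorem IsGoodDerivation.v0_sub_min_one_sub_le_minv0 (hD : IsGoodDerivation k v genus D dt)
    {η : K} (hη : η ≠ 0) (p : Point) :
    v0 v p η - min 1 (v0 v p η) - max 0 (dt p) ≤ minv0 v p η (D η) := by
  by_cases hp : 0 < v p η
  · obtain ⟨hDη, hvDη⟩ := hD.v_D_of_vne η hη p hp.ne'
    simp only [minv0, v0, if_neg hη, if_neg hDη]
    omega
  · have := minv0_nonneg v p η (D η)
    simp only [v0] at this ⊢
    omega

end Derivation

theorem NSgcd_deriv_lower_bound_general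
    (k K Point : Type*) [Field k] [Field K] [Algebra k K]
    (v : Point → K → ℤ) (genus : ℕ) (hK : IsFunctionField k v genus)
    (D : K → K) (dt : Point → ℤ) (hD : IsGoodDerivation k v genus D dt)
    (S : Set Point) (η : K) (hη : η ≠ 0) :
    NS v S η - NSbar v S η - 3 * (genus : ℤ) ≤ NSgcd v S η (D η) := by
  set Z := hK.zerosOutside S hη
  have sum_zeros := hK.finsum_mem_compl_eq_sum_zerosOutside S hη
  have hv0 (p : Point) (hp : v p η ≤ 0) : v0 v p η = 0 := max_eq_left hp
  have hNS : NS v S η = ∑ p ∈ Z, v0 v p η := sum_zeros _ hv0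
  have hNSbar : NSbar v S η = ∑ p ∈ Z, min 1 (v0 v p η) :=
    sum_zeros _ fun p hp => by simp [hv0 p hp]
  have hNSgcd : NSgcd v S η (D η) = ∑ p ∈ Z, minv0 v p η (D η) :=
    sum_zeros _ fun p hp => le_antisymm ((minv0_le_v0_left v p hη _).trans_eq (hv0 p hp))
      (minv0_nonneg v p η _)
  calc NS v S η - NSbar v S η - 3 * (genus : ℤ)
      ≤ ∑ p ∈ Z, (v0 v p η - min 1 (v0 v p η) - max 0 (dt p)) := by
        rw [Finset.sum_sub_distrib, Finset.sum_sub_distrib, hNS, hNSbar]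
        linarith [hD.sum_max_zero_dt_le hK Z]
    _ ≤ NSgcd v S η (D η) := by
        rw [hNSgcd]
        exact Finset.sum_le_sum fun p _ => hD.v0_sub_min_one_sub_le_minv0 hη p

/-- **Lemma 3.1(a).** `N_{S,gcd}(η, η') ≥ N_S(η) − N̄_S(η) − 3𝔤` for every nonzero `η ∈ K`. -/
theorem NSgcd_deriv_lower_bound
    (k K Point : Type*) [Field k] [Field K] [Algebra k K] [IsAlgClosed k] [CharZero k]
    (v : Point → K → ℤ) (genus : ℕ) (hK : IsFunctionField k v genus)
    (D : K → K) (dt : Point → ℤ) (hD : IsGoodDerivation k v genus D dt)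
    (S : Set Point) (hS : S.Finite) (η : K) (hη : η ≠ 0) :
    NS v S η - NSbar v S η - 3 * (genus : ℤ) ≤ NSgcd v S η (D η) :=
  NSgcd_deriv_lower_bound_general k K Point v genus hK D dt hD S η hη

end FunctionFieldGCD
end

section
/- Let F = Σ_{i∈I_F} a_i x^i ∈ K[x_1,…,x_n] be an irreducible polynomial and u ∈ (K^*)^n. Then the two polynomials F and D_u(F) are not coprime in K[x_1,…,x_n] if and only if (a_i u^i)/(a_j u^j) ∈ k^* whenever i, j ∈ I_F. -/
open scoped BigOperators Classical

namespace FunctionFieldGCD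

variable {K : Type*} [Field K] {Point : Type*}

/-! Because `D_u(F)` has no monomials outside `I_F`, an irreducible `F` shares a factor with it
only if `D_u(F) = c • F` for some `c ∈ K`, i.e. all the `a_i u^i` have the same logarithmic
derivative `c`. That happens exactly when their ratios have derivative zero, i.e. lie in `k`. -/

open MvPolynomial

theorem _root_.MvPolynomial.dvd_iff_exists_eq_C_mul_of_support_subset {σ R : Type*}
    [CommRing R] [IsDomain R]
    {F H : MvPolynomial σ R} (hF : F ≠ 0) (hsupp : H.support ⊆ F.support) :
    F ∣ H ↔ ∃ c : R, H = C c * F := by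
  refine ⟨?_, fun ⟨c, hc⟩ => ⟨C c, hc.trans (mul_comm _ _)⟩⟩
  rintro ⟨G, rfl⟩
  rcases eq_or_ne G 0 with rfl | hG
  · exact ⟨0, by simp⟩
  -- `F * G` has no more monomials than `F`, so it cannot have larger total degree.
  have hdeg : G.totalDegree = 0 := by
    have := totalDegree_le_of_support_subset hsupp
    rw [totalDegree_mul_of_isDomain hF hG] at this
    omega
  exact ⟨G.coeff 0, by rw [mul_comm, ← totalDegree_eq_zero_iff_eq_C.mp hdeg]⟩

theorem not_coprimePoly_iff_dvd {n : ℕ} {F G : MvPolynomial (Fin n) K} (hF : Irreducible F) :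
    ¬ CoprimePoly F G ↔ F ∣ G := by
  simp only [CoprimePoly, not_forall, exists_prop]
  constructor
  · rintro ⟨P, hPF, hPG, hP⟩
    exact ((hF.dvd_iff.mp hPF).resolve_left hP).dvd.trans hPG
  · exact fun h => ⟨F, dvd_rfl, h, hF.not_isUnit⟩

section Du

variable (D : K → K) {n : ℕ} (u : Fin n → K) (F : MvPolynomial (Fin n) K)

theorem coeff_Du (mm : Fin n →₀ ℕ) :
    coeff mm (Du D u F) =
      if mm ∈ F.support then D (coeff mm F * ∏ j, u j ^ mm j) / ∏ j, u j ^ mm j else 0 := by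
  simp only [Du, coeff_sum, coeff_monomial]
  exact Finset.sum_ite_eq' F.support mm _

theorem support_Du_subset : (Du D u F).support ⊆ F.support := by
  intro mm hmm
  by_contra hn
  exact mem_support_iff.mp hmm (by rw [coeff_Du, if_neg hn])

variable {u}

theorem prod_pow_ne_zero (hu : ∀ i, u i ≠ 0) (mm : Fin n →₀ ℕ) : ∏ j, u j ^ mm j ≠ 0 :=
  Finset.prod_ne_zero_iff.mpr fun j _ => pow_ne_zero _ (hu j)

theorem Du_eq_C_mul_iff (hu : ∀ i, u i ≠ 0) (c : K) :
    Du D u F = C c * F ↔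
      ∀ mm ∈ F.support, D (coeff mm F * ∏ j, u j ^ mm j) = c * (coeff mm F * ∏ j, u j ^ mm j) := by
  rw [MvPolynomial.ext_iff]
  refine forall_congr' fun mm => ?_
  rw [coeff_Du, coeff_C_mul]
  by_cases hmm : mm ∈ F.support
  · rw [if_pos hmm, div_eq_iff (prod_pow_ne_zero hu mm), mul_assoc]
    simp only [hmm, forall_const]
  · simp [hmm, notMem_support_iff.mp hmm]

end Du

namespace IsGoodDerivation

variable {k : Type*} [Field k] [Algebra k K] {v : Point → K → ℤ} {genus : ℕ}
  {D : K → K} {dt : Point → ℤ}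

theorem map_algebraMap_mul (hD : IsGoodDerivation k v genus D dt) (c : k) (x : K) :
    D (algebraMap k K c * x) = algebraMap k K c * D x := by
  rw [hD.leibniz, hD.map_const, mul_zero, add_zero]

theorem isConst_div_of_map_eq_mul (hD : IsGoodDerivation k v genus D dt) {c x y : K}
    (hy : y ≠ 0) (hx : D x = c * x) (hy' : D y = c * y) : IsConst k (x / y) := by
  refine hD.ker_const _ ((mul_eq_zero.mp ?_).resolve_left hy)
  have hxy : x = x / y * y := (div_mul_cancel₀ x hy).symm
  have hleib := hD.leibniz (x / y) y
  rw [← hxy, hx, hy'] at hleib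
  linear_combination c * hxy - hleib

theorem exists_forall_map_eq_mul_iff (hD : IsGoodDerivation k v genus D dt) {ι : Type*}
    (s : Set ι) {w : ι → K} (hw : ∀ i ∈ s, w i ≠ 0) :
    (∃ c : K, ∀ i ∈ s, D (w i) = c * w i) ↔ ∀ i ∈ s, ∀ j ∈ s, IsConst k (w i / w j) := by
  refine ⟨fun ⟨c, hc⟩ i hi j hj => hD.isConst_div_of_map_eq_mul (hw j hj) (hc i hi) (hc j hj),
    fun hconst => ?_⟩
  rcases s.eq_empty_or_nonempty with rfl | ⟨j, hj⟩
  · exact ⟨0, by simp⟩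
  refine ⟨D (w j) / w j, fun i hi => ?_⟩
  obtain ⟨a, ha⟩ := hconst i hi j hj
  have hwi : w i = algebraMap k K a * w j := by rw [ha, div_mul_cancel₀ _ (hw j hj)]
  rw [hwi, hD.map_algebraMap_mul]
  field_simp [hw j hj]

end IsGoodDerivation

theorem not_coprime_Du_iff_general
    (k K Point : Type*) [Field k] [Field K] [Algebra k K]
    (v : Point → K → ℤ) (genus : ℕ)
    (D : K → K) (dt : Point → ℤ) (hD : IsGoodDerivation k v genus D dt)
    (n : ℕ) (F : MvPolynomial (Fin n) K) (hF : Irreducible F)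
    (u : Fin n → K) (hu : ∀ i, u i ≠ 0) :
    (¬ CoprimePoly F (Du D u F)) ↔
      ∀ mi ∈ F.support, ∀ mj ∈ F.support,
        IsConst k ((MvPolynomial.coeff mi F * ∏ j, u j ^ mi j) /
          (MvPolynomial.coeff mj F * ∏ j, u j ^ mj j)) := by
  have hw : ∀ mm ∈ (F.support : Set (Fin n →₀ ℕ)), coeff mm F * ∏ j, u j ^ mm j ≠ 0 :=
    fun mm hmm => mul_ne_zero (mem_support_iff.mp hmm) (prod_pow_ne_zero hu mm)
  calc (¬ CoprimePoly F (Du D u F)) ↔ F ∣ Du D u F := not_coprimePoly_iff_dvd hF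
    _ ↔ ∃ c, Du D u F = C c * F :=
      dvd_iff_exists_eq_C_mul_of_support_subset hF.ne_zero (support_Du_subset D u F)
    _ ↔ ∃ c, ∀ mm ∈ F.support, D (coeff mm F * ∏ j, u j ^ mm j) =
        c * (coeff mm F * ∏ j, u j ^ mm j) := exists_congr (Du_eq_C_mul_iff D F hu)
    _ ↔ _ := hD.exists_forall_map_eq_mul_iff _ hw

/-- **Lemma 3.3.** For irreducible `F = Σ_{i∈I_F} a_i x^i` and `u ∈ (K^*)^n`, the polynomials
`F` and `D_u(F)` are *not* coprime iff `(a_i u^i)/(a_j u^j) ∈ k^*` for all `i, j ∈ I_F`. -/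
theorem not_coprime_Du_iff
    (k K Point : Type*) [Field k] [Field K] [Algebra k K] [IsAlgClosed k] [CharZero k]
    (v : Point → K → ℤ) (genus : ℕ) (hK : IsFunctionField k v genus)
    (D : K → K) (dt : Point → ℤ) (hD : IsGoodDerivation k v genus D dt)
    (n : ℕ) (F : MvPolynomial (Fin n) K) (hF : Irreducible F)
    (u : Fin n → K) (hu : ∀ i, u i ≠ 0) :
    (¬ CoprimePoly F (Du D u F)) ↔
      ∀ mi ∈ F.support, ∀ mj ∈ F.support,
        IsConst k ((MvPolynomial.coeff mi F * ∏ j, u j ^ mi j) /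
          (MvPolynomial.coeff mj F * ∏ j, u j ^ mj j)) :=
  not_coprime_Du_iff_general k K Point v genus D dt hD n F hF u hu

end FunctionFieldGCD
end
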